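/- arXiv:2307.13935 — 2 statements merged into one kernel-verified Lean document; each statement's English description precedes it below -/
import Mathlib

section
/- Discrete Noether identity (one dimension, first order): if Q : ℤ → ℝ satisfies the infinitesimal invariance condition Q(n)·∂L/∂u₀(n, u(n), u(n+1)) + Q(n+1)·∂L/∂u₁(n, u(n), u(n+1)) = F(n+1) - F(n) for all n (for some F : ℤ → ℝ), then Q(n)·E(L)(n) = D(F(n) - Q(n)·∂L/∂u₁(n-1, u(n-1), u(n)))(n), where D is the forward difference. In particular, on solutions of the Euler–Lagrange equation E(L) = 0, the quantity F(n) - Q(n)·∂L/∂u₁(n-1, u(n-1), u(n)) is a conserved (first-integral) quantity. -/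
/-- `P₀ n` and `P₁ n` stand for the partial derivatives `∂L/∂u₀`, `∂L/∂u₁` at `(n, u n, u (n + 1))`. -/
theorem noether_identity_of_invariance (P₀ P₁ Q F : ℤ → ℝ)
    (hinv : ∀ n, Q n * P₀ n + Q (n + 1) * P₁ n = F (n + 1) - F n) (n : ℤ) :
    Q n * (P₀ n + P₁ (n - 1)) = (F (n + 1) - Q (n + 1) * P₁ n) - (F n - Q n * P₁ (n - 1)) := by
  linear_combination hinv n

theorem discrete_noether_identity (L : ℤ → ℝ → ℝ → ℝ) (u Q F : ℤ → ℝ)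
    (hinv : ∀ n : ℤ, Q n * deriv (fun a => L n a (u (n + 1))) (u n)
        + Q (n + 1) * deriv (fun b => L n (u n) b) (u (n + 1)) = F (n + 1) - F n) :
    let E : ℤ → ℝ := fun n => deriv (fun a => L n a (u (n + 1))) (u n)
        + deriv (fun b => L (n - 1) (u (n - 1)) b) (u n)
    let G : ℤ → ℝ := fun n => F n - Q n * deriv (fun b => L (n - 1) (u (n - 1)) b) (u n)
    (∀ n : ℤ, Q n * E n = G (n + 1) - G n)
      ∧ ((∀ n : ℤ, E n = 0) → ∀ n : ℤ, G (n + 1) = G n) := by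
  intro E G
  have identity (n : ℤ) : Q n * E n = G (n + 1) - G n := by
    simpa only [E, G, add_sub_cancel_right, sub_add_cancel] using
      noether_identity_of_invariance _ (fun n => deriv (fun b => L n (u n) b) (u (n + 1))) Q F
        hinv n
  refine ⟨identity, fun hEL n => ?_⟩
  simpa only [hEL n, mul_zero, eq_comm, sub_eq_zero] using identity n
end

section
/- The Euler-B discrete Hamiltonian map preserves the symplectic form: if (q₀, p₀) ↦ (q₁, p₁) is defined implicitly by q₁ - q₀ = ∂H/∂p (q₀, p₁) and p₁ - p₀ = -∂H/∂q (q₀, p₁) for a smooth H : ℝ² → ℝ, and this relation defines a smooth map near a point, then its Jacobian matrix M satisfies Mᵀ J M = J, where J = [[0,1],[-1,0]]; equivalently, dp₁ ∧ dq₁ = dp₀ ∧ dq₀. -/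
/-!
With `w(q, p) = (q, p₁(q, p))` we have `q₁ = q + H_p ∘ w` and `p₁ = p - H_q ∘ w`. Writing
`∇p₁ = (a, b)` and `∇q₁ = (c, d)` and differentiating gives
`c = 1 + H_pq + a H_pp`, `d = b H_pp` and `b = 1 - b H_qp`, so
`c b - d a = b (1 + H_pq) = 1` by the symmetry `H_pq = H_qp` of the Hessian.
A `2 × 2` matrix `M` satisfies `Mᵀ J M = (det M) J`, hence the Jacobian is symplectic.
-/

open ContinuousLinearMap

theorem Matrix.transpose_mul_J_mul_self {R : Type*} [CommRing R] (M : Matrix (Fin 2) (Fin 2) R) :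
    M.transpose * !![0, 1; -1, 0] * M = M.det • !![0, 1; -1, 0] := by
  ext i j
  fin_cases i <;> fin_cases j <;>
    simp [Matrix.det_fin_two, Matrix.mul_apply, Fin.sum_univ_two] <;> ring

theorem hasFDerivAt_fderiv_apply_comp {𝕜 E F G : Type*} [NontriviallyNormedField 𝕜]
    [NormedAddCommGroup E] [NormedSpace 𝕜 E] [NormedAddCommGroup F] [NormedSpace 𝕜 F]
    [NormedAddCommGroup G] [NormedSpace 𝕜 G] {H : E → G} {g : F → E} {g' : F →L[𝕜] E} {x : F}
    (hH : DifferentiableAt 𝕜 (fderiv 𝕜 H) (g x)) (hg : HasFDerivAt g g' x) (v : E) :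
    HasFDerivAt (fun z => fderiv 𝕜 H (g z) v) ((fderiv 𝕜 (fderiv 𝕜 H) (g x)).flip v ∘L g') x :=
  (apply 𝕜 G v).hasFDerivAt.comp x (hH.hasFDerivAt.comp x hg)

theorem fderiv_apply_of_eq_add_fderiv_graph {H p f : ℝ × ℝ → ℝ} {z₀ : ℝ × ℝ}
    (hH : DifferentiableAt ℝ (fderiv ℝ H) (z₀.1, p z₀)) (hp : DifferentiableAt ℝ p z₀)
    (ℓ : ℝ × ℝ →L[ℝ] ℝ) (s : ℝ) (v : ℝ × ℝ) (hf : ∀ z, f z = ℓ z + s * fderiv ℝ H (z.1, p z) v)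
    (u : ℝ × ℝ) :
    fderiv ℝ f z₀ u = ℓ u + s * fderiv ℝ (fderiv ℝ H) (z₀.1, p z₀) (u.1, fderiv ℝ p z₀ u) v := by
  have hgraph := hasFDerivAt_fst.prodMk hp.hasFDerivAt
  have hderiv : HasFDerivAt (fun z => ℓ z + s * fderiv ℝ H (z.1, p z) v) _ z₀ :=
    ℓ.hasFDerivAt.add
      ((hasFDerivAt_fderiv_apply_comp (g := fun z => (z.1, p z)) hH hgraph v).const_mul s)
  rw [funext hf, hderiv.fderiv]
  simp

/-- `Dq`, `Dp` play the differentials of `q₁`, `p₁` and `A` the Hessian of `H` at `(q₀, p₁)`. -/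
theorem eulerB_det_eq_one (A : ℝ × ℝ →L[ℝ] ℝ × ℝ →L[ℝ] ℝ)
    (hA : A (0, 1) (1, 0) = A (1, 0) (0, 1)) (Dq Dp : ℝ × ℝ → ℝ)
    (hq : ∀ u, Dq u = u.1 + A (u.1, Dp u) (0, 1))
    (hp : ∀ u, Dp u = u.2 - A (u.1, Dp u) (1, 0)) :
    Dq (1, 0) * Dp (0, 1) - Dq (0, 1) * Dp (1, 0) = 1 := by
  have expand (s t : ℝ) (v : ℝ × ℝ) : A (s, t) v = s * A (1, 0) v + t * A (0, 1) v := by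
    have : ((s, t) : ℝ × ℝ) = s • (1, 0) + t • (0, 1) := by ext <;> simp
    rw [this, map_add, map_smul, map_smul, add_apply, smul_apply, smul_apply, smul_eq_mul,
      smul_eq_mul]
  have hb := hp (0, 1)
  have hc := hq (1, 0)
  have hd := hq (0, 1)
  rw [expand] at hb hc hd
  rw [hc, hd, ← hA]
  linear_combination hb

theorem euler_B_map_is_symplectic_general (H q1 p1 : ℝ × ℝ → ℝ)
    (hH : ContDiff ℝ 2 H)
    (hp1 : Differentiable ℝ p1)
    (hrel1 : ∀ z : ℝ × ℝ, q1 z - z.1 = fderiv ℝ H (z.1, p1 z) (0, 1))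
    (hrel2 : ∀ z : ℝ × ℝ, p1 z - z.2 = - fderiv ℝ H (z.1, p1 z) (1, 0))
    (z₀ : ℝ × ℝ) :
    let M : Matrix (Fin 2) (Fin 2) ℝ :=
      !![fderiv ℝ q1 z₀ (1, 0), fderiv ℝ q1 z₀ (0, 1);
         fderiv ℝ p1 z₀ (1, 0), fderiv ℝ p1 z₀ (0, 1)]
    let J : Matrix (Fin 2) (Fin 2) ℝ := !![0, 1; -1, 0]
    Matrix.transpose M * J * M = J := by
  intro M J
  have hHess : DifferentiableAt ℝ (fderiv ℝ H) (z₀.1, p1 z₀) :=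
    (hH.fderiv_right le_rfl).differentiable one_ne_zero _
  have hsymm := hH.contDiffAt.isSymmSndFDerivAt (x := (z₀.1, p1 z₀)) (by simp)
  have hq := fderiv_apply_of_eq_add_fderiv_graph (f := q1) hHess (hp1 z₀) (fst ℝ ℝ ℝ) 1 (0, 1)
    fun z => by simp only [coe_fst']; linarith [hrel1 z]
  have hp := fderiv_apply_of_eq_add_fderiv_graph (f := p1) hHess (hp1 z₀) (snd ℝ ℝ ℝ) (-1)
    (1, 0) fun z => by simp only [coe_snd']; linarith [hrel2 z]
  have hdet : M.det = 1 := by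
    rw [Matrix.det_fin_two_of]
    exact eulerB_det_eq_one _ (hsymm _ _) _ _
      (fun u => (hq u).trans (by rw [coe_fst', one_mul]))
      (fun u => (hp u).trans (by rw [coe_snd']; ring))
  rw [Matrix.transpose_mul_J_mul_self, hdet, one_smul]

theorem euler_B_map_is_symplectic (H q1 p1 : ℝ × ℝ → ℝ)
    (hH : ContDiff ℝ 2 H)
    (hq1 : Differentiable ℝ q1) (hp1 : Differentiable ℝ p1)
    (hrel1 : ∀ z : ℝ × ℝ, q1 z - z.1 = fderiv ℝ H (z.1, p1 z) (0, 1))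
    (hrel2 : ∀ z : ℝ × ℝ, p1 z - z.2 = - fderiv ℝ H (z.1, p1 z) (1, 0))
    (z₀ : ℝ × ℝ) :
    let M : Matrix (Fin 2) (Fin 2) ℝ :=
      !![fderiv ℝ q1 z₀ (1, 0), fderiv ℝ q1 z₀ (0, 1);
         fderiv ℝ p1 z₀ (1, 0), fderiv ℝ p1 z₀ (0, 1)]
    let J : Matrix (Fin 2) (Fin 2) ℝ := !![0, 1; -1, 0]
    Matrix.transpose M * J * M = J :=
  euler_B_map_is_symplectic_general H q1 p1 hH hp1 hrel1 hrel2 z₀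
end
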